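/- arXiv:2306.03006 — 10 statements merged into one kernel-verified Lean document; each statement's English description precedes it below -/
import Mathlib

section
/- If I is an ideal of a polynomial ring generated by binomials (differences of two monomials), then for any term order the reduced Gröbner basis of I consists of binomials. -/
/-!
Call exponents `u, v` congruent modulo `I` when `c • xᵘ - d • xᵛ ∈ I` for some nonzero `c, d`.
If `I` is spanned by binomials, it is spanned over `K` by monomial multiples of binomials, and
each of these either is a monomial or has both terms in one congruence class; hence `I` is
closed under keeping only the terms whose exponents lie in a given union of classes.

Let `g` be in the reduced Gröbner basis, with leading exponent `α`. All exponents of `g` other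
than `α` are standard (divisible by no leading exponent of the basis), and a nonzero element
of `I` cannot have only standard exponents. So the terms of `g` outside the class of `α`
vanish, and for any other exponent `β` of `g` there is `xᵅ - c • xᵝ ∈ I`; the difference of
`g` and this binomial lies in `I` and has only standard exponents, so `g = xᵅ - c • xᵝ`.
-/

open MvPolynomial

/-- A binomial: a difference of two monomials (possibly with coefficients, so
monomials and zero also count, as in Eisenbud–Sturmfels). -/
def IsBinomial {σ K : Type*} [Field K] (f : MvPolynomial σ K) : Prop :=
  ∃ a b : σ →₀ ℕ, ∃ c d : K, f = monomial a c - monomial b d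

/-- The exponent of the lead term of `f` with respect to the monomial order `m`. -/
noncomputable def leadExp {σ K : Type*} [Field K] (m : MonomialOrder σ)
    (f : MvPolynomial σ K) : σ →₀ ℕ :=
  m.toSyn.symm (f.support.sup fun a => m.toSyn a)

/-- `G` is a Gröbner basis of `I` w.r.t. `m`: `G ⊆ I` and the lead term of every nonzero
element of `I` is divisible by the lead term of some element of `G`. -/
def IsGroebnerBasis {σ K : Type*} [Field K] (m : MonomialOrder σ)
    (I : Ideal (MvPolynomial σ K)) (G : Finset (MvPolynomial σ K)) : Prop :=
  (↑G : Set (MvPolynomial σ K)) ⊆ I ∧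
    ∀ f ∈ I, f ≠ 0 → ∃ g ∈ G, g ≠ 0 ∧ leadExp m g ≤ leadExp m f

/-- A reduced Gröbner basis: each element is monic, and no term of any element is
divisible by the lead term of another element. -/
def IsReducedGroebnerBasis {σ K : Type*} [Field K] (m : MonomialOrder σ)
    (I : Ideal (MvPolynomial σ K)) (G : Finset (MvPolynomial σ K)) : Prop :=
  IsGroebnerBasis m I G ∧ (∀ g ∈ G, coeff (leadExp m g) g = 1) ∧
    ∀ g ∈ G, ∀ g' ∈ G, g ≠ g' → ∀ a ∈ g'.support, ¬ leadExp m g ≤ a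

namespace MvPolynomial
variable {σ R : Type*} [CommSemiring R]

noncomputable def filterTerms (p : (σ →₀ ℕ) → Prop) : MvPolynomial σ R →ₗ[R] MvPolynomial σ R :=
  letI := Classical.decPred p
  (AddMonoidAlgebra.coeffLinearEquiv _).symm.toLinearMap ∘ₗ Submodule.subtype _ ∘ₗ
    Finsupp.restrictDom _ _ {d | p d} ∘ₗ (AddMonoidAlgebra.coeffLinearEquiv _).toLinearMap

theorem coeff_filterTerms (p : (σ →₀ ℕ) → Prop) [DecidablePred p] (d : σ →₀ ℕ)
    (f : MvPolynomial σ R) : coeff d (filterTerms p f) = if p d then coeff d f else 0 := by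
  simp [filterTerms, MvPolynomial, coeff, Finsupp.filter_apply]

theorem support_filterTerms_subset (p : (σ →₀ ℕ) → Prop) (f : MvPolynomial σ R) :
    (filterTerms p f).support ⊆ f.support := by
  classical
  intro d hd
  rw [mem_support_iff, coeff_filterTerms] at hd
  rw [mem_support_iff]
  exact fun h => hd (by simp [h])

theorem filterTerms_monomial (p : (σ →₀ ℕ) → Prop) [DecidablePred p] (u : σ →₀ ℕ) (c : R) :
    filterTerms p (monomial u c) = if p u then monomial u c else 0 := by
  classical
  ext d
  rw [coeff_filterTerms, coeff_monomial]
  by_cases hud : u = d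
  · subst hud
    by_cases hp : p u <;> simp [hp]
  · by_cases hp : p u <;> simp [hp, hud, coeff_monomial]

theorem filterTerms_monomial_mul (p : (σ →₀ ℕ) → Prop) (a : σ →₀ ℕ) (c : R)
    (f : MvPolynomial σ R) :
    filterTerms p (monomial a c * f) = monomial a c * filterTerms (fun d => p (a + d)) f := by
  classical
  ext d
  rw [coeff_filterTerms, coeff_monomial_mul', coeff_monomial_mul']
  by_cases had : a ≤ d
  · simp [had, coeff_filterTerms, add_tsub_cancel_of_le had]
  · simp [had]

end MvPolynomial

section MonomialCongr
variable {σ R : Type*} [CommRing R]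

def MonomialCongr (I : Ideal (MvPolynomial σ R)) (u v : σ →₀ ℕ) : Prop :=
  ∃ c d : R, c ≠ 0 ∧ d ≠ 0 ∧ monomial u c - monomial v d ∈ I

variable {I : Ideal (MvPolynomial σ R)}

theorem MonomialCongr.refl [Nontrivial R] (u : σ →₀ ℕ) : MonomialCongr I u u :=
  ⟨1, 1, one_ne_zero, one_ne_zero, by simp⟩

theorem MonomialCongr.symm {u v : σ →₀ ℕ} : MonomialCongr I u v → MonomialCongr I v u := by
  rintro ⟨c, d, hc, hd, h⟩
  exact ⟨d, c, hd, hc, by simpa using I.neg_mem h⟩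

theorem MonomialCongr.trans [NoZeroDivisors R] {u v w : σ →₀ ℕ} :
    MonomialCongr I u v → MonomialCongr I v w → MonomialCongr I u w := by
  rintro ⟨c, d, hc, hd, huv⟩ ⟨c', d', hc', hd', hvw⟩
  refine ⟨c' * c, d * d', mul_ne_zero hc' hc, mul_ne_zero hd hd', ?_⟩
  have : monomial u (c' * c) - monomial w (d * d') =
      C c' * (monomial u c - monomial v d) + C d * (monomial v c' - monomial w d') := by
    simp only [mul_sub, C_mul_monomial, mul_comm d c']
    abel
  rw [this]
  exact I.add_mem (I.mul_mem_left _ huv) (I.mul_mem_left _ hvw)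

theorem MonomialCongr.add_left {u v : σ →₀ ℕ} (a : σ →₀ ℕ) :
    MonomialCongr I u v → MonomialCongr I (a + u) (a + v) := by
  rintro ⟨c, d, hc, hd, h⟩
  refine ⟨c, d, hc, hd, ?_⟩
  simpa [mul_sub, monomial_mul] using I.mul_mem_left (monomial a 1) h

theorem monomial_mem_of_not_monomialCongr {u v : σ →₀ ℕ} {c d : R}
    (huv : ¬ MonomialCongr I u v) (h : monomial u c - monomial v d ∈ I) :
    monomial u c ∈ I ∧ monomial v d ∈ I := by
  by_cases hc : c = 0
  · subst hc
    simpa using I.neg_mem h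
  by_cases hd : d = 0
  · subst hd
    simpa using h
  exact absurd ⟨c, d, hc, hd, h⟩ huv

theorem filterTerms_binomial_mem {p : (σ →₀ ℕ) → Prop}
    (hp : ∀ u v, MonomialCongr I u v → (p u ↔ p v)) {u v : σ →₀ ℕ} {c d : R}
    (h : monomial u c - monomial v d ∈ I) :
    filterTerms p (monomial u c - monomial v d) ∈ I := by
  classical
  have hmon (huv : ¬ (p u ↔ p v)) := monomial_mem_of_not_monomialCongr (mt (hp u v) huv) h
  rw [map_sub, filterTerms_monomial, filterTerms_monomial]
  by_cases hpu : p u <;> by_cases hpv : p v <;> simp only [hpu, hpv, if_true, if_false]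
  · exact h
  · simpa using (hmon (by tauto)).1
  · simpa using I.neg_mem (hmon (by tauto)).2
  · simp

theorem filterTerms_mem_span_binomials {K : Type*} [Field K] {S : Set (MvPolynomial σ K)}
    (hS : ∀ f ∈ S, IsBinomial f) {p : (σ →₀ ℕ) → Prop}
    (hp : ∀ u v, MonomialCongr (Ideal.span S) u v → (p u ↔ p v)) {f : MvPolynomial σ K}
    (hf : f ∈ Ideal.span S) : filterTerms p f ∈ Ideal.span S := by
  induction hf using Submodule.span_induction generalizing p with
  | mem s hs =>
    obtain ⟨u, v, c, d, rfl⟩ := hS s hs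
    exact filterTerms_binomial_mem hp (Ideal.subset_span hs)
  | zero => simp
  | add f g _ _ hf hg => simpa using Ideal.add_mem _ (hf hp) (hg hp)
  | smul r f _ hf =>
    induction r using MvPolynomial.induction_on' with
    | monomial a c =>
      rw [smul_eq_mul, filterTerms_monomial_mul]
      exact Ideal.mul_mem_left _ _ (hf fun u v huv => hp _ _ (huv.add_left a))
    | add r r' hr hr' => simpa [add_mul] using Ideal.add_mem _ hr hr'

end MonomialCongr

section Groebner
variable {σ K : Type*} [Field K] (m : MonomialOrder σ)

def IsStandardExp (G : Finset (MvPolynomial σ K)) (a : σ →₀ ℕ) : Prop :=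
  ∀ g ∈ G, ¬ leadExp m g ≤ a

variable {m} {I : Ideal (MvPolynomial σ K)} {G : Finset (MvPolynomial σ K)}

-- `leadExp m f` unfolds to `m.degree f`, so the `MonomialOrder.degree` API applies to it.
theorem IsGroebnerBasis.eq_zero_of_isStandardExp (hG : IsGroebnerBasis m I G)
    {f : MvPolynomial σ K} (hf : f ∈ I) (hstd : ∀ a ∈ f.support, IsStandardExp m G a) :
    f = 0 := by
  by_contra hf0
  obtain ⟨g, hg, -, hle⟩ := hG.2 f hf hf0
  exact hstd _ (m.degree_mem_support hf0) g hg hle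

theorem IsReducedGroebnerBasis.isStandardExp_of_mem_support (hG : IsReducedGroebnerBasis m I G)
    {g : MvPolynomial σ K} (hg : g ∈ G) {a : σ →₀ ℕ} (ha : a ∈ g.support)
    (hne : a ≠ leadExp m g) : IsStandardExp m G a := by
  intro g' hg' hle
  obtain rfl | hg'g := eq_or_ne g' g
  · exact hne (m.toSyn.injective (le_antisymm (m.le_degree ha) (m.toSyn_monotone hle)))
  · exact hG.2.2 g' hg' g hg hg'g a ha hle

theorem IsReducedGroebnerBasis.eq_of_mem (hG : IsReducedGroebnerBasis m I G)
    {g : MvPolynomial σ K} (hg : g ∈ G) {h : MvPolynomial σ K} (hh : h ∈ I)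
    (hlead : coeff (leadExp m g) h = 1)
    (htail : ∀ a ∈ h.support, a ≠ leadExp m g → IsStandardExp m G a) : g = h := by
  classical
  rw [← sub_eq_zero]
  refine hG.1.eq_zero_of_isStandardExp (I.sub_mem (hG.1.1 hg) hh) fun a ha => ?_
  have hne : a ≠ leadExp m g := by
    rintro rfl
    rw [mem_support_iff, coeff_sub, hG.2.1 g hg, hlead, sub_self] at ha
    exact ha rfl
  rcases Finset.mem_union.mp (support_sub σ g h ha) with hag | hah
  · exact hG.isStandardExp_of_mem_support hg hag hne
  · exact htail a hah hne

theorem IsReducedGroebnerBasis.forall_mem_support_of_filterTerms_mem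
    (hG : IsReducedGroebnerBasis m I G) {g : MvPolynomial σ K} (hg : g ∈ G)
    {p : (σ →₀ ℕ) → Prop} (hlead : p (leadExp m g)) (hp : filterTerms p g ∈ I) :
    ∀ a ∈ g.support, p a := by
  classical
  have hfilter : g = filterTerms p g :=
    hG.eq_of_mem hg hp (by rw [coeff_filterTerms, if_pos hlead, hG.2.1 g hg])
      fun a ha => hG.isStandardExp_of_mem_support hg (support_filterTerms_subset p g ha)
  intro a ha
  by_contra hpa
  rw [hfilter, mem_support_iff, coeff_filterTerms, if_neg hpa] at ha
  exact ha rfl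

theorem IsReducedGroebnerBasis.eq_monomial_sub_monomial (hG : IsReducedGroebnerBasis m I G)
    {g : MvPolynomial σ K} (hg : g ∈ G) {β : σ →₀ ℕ} (hβ : β ∈ g.support)
    (hβα : β ≠ leadExp m g) {c d : K} (hc : c ≠ 0)
    (h : monomial (leadExp m g) c - monomial β d ∈ I) :
    g = monomial (leadExp m g) 1 - monomial β (c⁻¹ * d) := by
  classical
  refine hG.eq_of_mem hg ?_ ?_ ?_
  · simpa [mul_sub, C_mul_monomial, inv_mul_cancel₀ hc] using I.mul_mem_left (C c⁻¹) h
  · simp [coeff_monomial, hβα]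
  · intro a ha haα
    rcases Finset.mem_union.mp (support_sub σ _ _ ha) with ha | ha <;>
      obtain rfl := Finset.mem_singleton.mp (support_monomial_subset ha)
    · exact absurd rfl haα
    · exact hG.isStandardExp_of_mem_support hg hβ hβα

end Groebner

theorem stmt1_general {σ K : Type*} [Field K] (m : MonomialOrder σ)
    (I : Ideal (MvPolynomial σ K)) (S : Set (MvPolynomial σ K))
    (hS : ∀ f ∈ S, IsBinomial f) (hI : I = Ideal.span S)
    (G : Finset (MvPolynomial σ K)) (hG : IsReducedGroebnerBasis m I G) :
    ∀ g ∈ G, IsBinomial g := by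
  subst hI
  intro g hg
  have hcongr : ∀ a ∈ g.support, MonomialCongr (Ideal.span S) (leadExp m g) a :=
    hG.forall_mem_support_of_filterTerms_mem hg (.refl _)
      (filterTerms_mem_span_binomials hS
        (fun u v huv => ⟨fun h => h.trans huv, fun h => h.trans huv.symm⟩) (hG.1.1 hg))
  by_cases htail : ∃ β ∈ g.support, β ≠ leadExp m g
  · obtain ⟨β, hβ, hβα⟩ := htail
    obtain ⟨c, d, hc, -, hαβ⟩ := hcongr β hβ
    exact ⟨_, _, _, _, hG.eq_monomial_sub_monomial hg hβ hβα hc hαβ⟩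
  · push Not at htail
    exact ⟨_, 0, _, 0, by simpa using eq_monomial_of_support_subset_singleton htail⟩

/-- If an ideal of a polynomial ring is generated by binomials, then for any term order
its reduced Gröbner basis consists of binomials. -/
theorem stmt1 {σ K : Type*} [Field K] [Fintype σ] (m : MonomialOrder σ)
    (I : Ideal (MvPolynomial σ K)) (S : Set (MvPolynomial σ K))
    (hS : ∀ f ∈ S, IsBinomial f) (hI : I = Ideal.span S)
    (G : Finset (MvPolynomial σ K)) (hG : IsReducedGroebnerBasis m I G) :
    ∀ g ∈ G, IsBinomial g :=
  stmt1_general m I S hS hI G hG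
end

section
/- Let w be a permutation in S_n. Then the rank function r_w satisfies r_w(i,j) < k for all (i,j) in the essential set E(w) if and only if w avoids all k! patterns of the form v·(k+2)(k+1) for v ∈ S_k, where v·(k+2)(k+1) denotes the permutation in S_{k+2} whose one-line notation is v(1),...,v(k),k+2,k+1. -/
/-- Rank function of a permutation (0-indexed): `r_w(i,j) = #{a ≤ i : w(a) ≤ j}`. -/
def rk {n : ℕ} (w : Equiv.Perm (Fin n)) (i j : Fin n) : ℕ :=
  (Finset.univ.filter (fun a : Fin n => a ≤ i ∧ w a ≤ j)).card

/-- Membership in the Rothe diagram `D(w)`. -/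
def inD {n : ℕ} (w : Equiv.Perm (Fin n)) (i j : Fin n) : Prop :=
  j < w i ∧ i < w.symm j

/-- Membership in Fulton's essential set `E(w)`. -/
def inEss {n : ℕ} (w : Equiv.Perm (Fin n)) (i j : Fin n) : Prop :=
  inD w i j ∧ (∀ i' : Fin n, (i' : ℕ) = (i : ℕ) + 1 → ¬ inD w i' j) ∧
    (∀ j' : Fin n, (j' : ℕ) = (j : ℕ) + 1 → ¬ inD w i j')

/-- `w` contains the pattern `v`. -/
def containsPattern {n m : ℕ} (w : Equiv.Perm (Fin n)) (v : Equiv.Perm (Fin m)) : Prop :=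
  ∃ f : Fin m → Fin n, StrictMono f ∧ ∀ a b : Fin m, v a < v b ↔ w (f a) < w (f b)

/-- The pattern `1243` as a permutation of `Fin 4` (0-indexed one-line notation `0 1 3 2`). -/
def p1243 : Equiv.Perm (Fin 4) := Equiv.swap 2 3

/-- The pattern `2143` as a permutation of `Fin 4` (0-indexed one-line notation `1 0 3 2`). -/
def p2143 : Equiv.Perm (Fin 4) := Equiv.swap 0 1 * Equiv.swap 2 3

/-- The permutation of `S_{k+2}` with one-line notation `v(1) … v(k) (k+2) (k+1)`. -/
def pat {k : ℕ} (v : Equiv.Perm (Fin k)) : Equiv.Perm (Fin (k + 2)) :=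
  finSumFinEquiv.symm.trans ((Equiv.sumCongr v (Equiv.swap 0 1)).trans finSumFinEquiv)

lemma pat_castAdd {k : ℕ} (v : Equiv.Perm (Fin k)) (c : Fin k) :
    pat v (Fin.castAdd 2 c) = Fin.castAdd 2 (v c) := by simp [pat]

lemma pat_natAdd {k : ℕ} (v : Equiv.Perm (Fin k)) (c : Fin 2) :
    pat v (Fin.natAdd k c) = Fin.natAdd k (Equiv.swap 0 1 c) := by simp [pat]

lemma pat_val_lt {k : ℕ} (v : Equiv.Perm (Fin k)) (c : Fin (k+2)) (h : (c:ℕ) < k) :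
    (pat v c : ℕ) = (v ⟨(c:ℕ), h⟩ : ℕ) := by
  have hc : c = Fin.castAdd 2 ⟨(c:ℕ), h⟩ := by ext; rfl
  have h2 := pat_castAdd v ⟨(c:ℕ), h⟩
  rw [← hc] at h2
  rw [h2]; rfl

lemma pat_val_k {k : ℕ} (v : Equiv.Perm (Fin k)) (c : Fin (k+2)) (h : (c:ℕ) = k) :
    (pat v c : ℕ) = k + 1 := by
  have hc : c = Fin.natAdd k 0 := by ext; simpa using h
  rw [hc, pat_natAdd, Equiv.swap_apply_left]; rfl

lemma pat_val_k1 {k : ℕ} (v : Equiv.Perm (Fin k)) (c : Fin (k+2)) (h : (c:ℕ) = k+1) :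
    (pat v c : ℕ) = k := by
  have hc : c = Fin.natAdd k 1 := by ext; simpa using h
  rw [hc, pat_natAdd, Equiv.swap_apply_right]; rfl

lemma rk_mono {n : ℕ} (w : Equiv.Perm (Fin n)) {i i' j j' : Fin n}
    (hi : i ≤ i') (hj : j ≤ j') : rk w i j ≤ rk w i' j' := by
  apply Finset.card_le_card
  intro a ha
  simp only [Finset.mem_filter, Finset.mem_univ, true_and] at *
  exact ⟨ha.1.trans hi, ha.2.trans hj⟩

lemma climb {n k : ℕ} (w : Equiv.Perm (Fin n)) :
    ∀ m (i j : Fin n), (n - (i:ℕ)) + (n - (j:ℕ)) ≤ m → inD w i j → k ≤ rk w i j →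
      ∃ i' j', inEss w i' j' ∧ k ≤ rk w i' j' := by
  intro m
  induction m with
  | zero => intro i j hm _ _; have := i.isLt; omega
  | succ m ih =>
    intro i j hm hD hrk
    by_cases hE : inEss w i j
    · exact ⟨i, j, hE, hrk⟩
    · have h2 : ¬ ((∀ i' : Fin n, (i':ℕ) = (i:ℕ)+1 → ¬ inD w i' j) ∧
          (∀ j' : Fin n, (j':ℕ) = (j:ℕ)+1 → ¬ inD w i j')) := fun h => hE ⟨hD, h⟩
      rw [not_and_or] at h2
      rcases h2 with h2 | h2 <;> push_neg at h2
      · obtain ⟨i', hi', hD'⟩ := h2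
        have hle : i ≤ i' := by rw [Fin.le_def]; omega
        have := i'.isLt
        exact ih i' j (by omega) hD' (hrk.trans (rk_mono w hle le_rfl))
      · obtain ⟨j', hj', hD'⟩ := h2
        have hle : j ≤ j' := by rw [Fin.le_def]; omega
        have := j'.isLt
        exact ih i j' (by omega) hD' (hrk.trans (rk_mono w le_rfl hle))

lemma contains_to_cell {n k : ℕ} (w : Equiv.Perm (Fin n)) (v : Equiv.Perm (Fin k))
    (hc : containsPattern w (pat v)) :
    ∃ i j : Fin n, inEss w i j ∧ k ≤ rk w i j := by
  obtain ⟨f, hf, hp⟩ := hc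
  set A : Fin (k+2) := ⟨k, by omega⟩ with hA
  set B : Fin (k+2) := ⟨k+1, by omega⟩ with hB
  have hAB : w (f B) < w (f A) := by
    rw [← hp]
    rw [Fin.lt_def, pat_val_k v A rfl, pat_val_k1 v B rfl]
    omega
  have hab : f A < f B := hf (by rw [Fin.lt_def]; show k < k+1; omega)
  have hDcell : inD w (f A) (w (f B)) := ⟨hAB, by simpa using hab⟩
  have hrkcell : k ≤ rk w (f A) (w (f B)) := by
    have hsub : (Finset.univ.image (fun c : Fin k => f (Fin.castAdd 2 c))) ⊆
        Finset.univ.filter (fun a => a ≤ f A ∧ w a ≤ w (f B)) := by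
      intro x hx
      simp only [Finset.mem_image, Finset.mem_univ, true_and] at hx
      obtain ⟨c, rfl⟩ := hx
      refine Finset.mem_filter.2 ⟨Finset.mem_univ _, le_of_lt (hf ?_), le_of_lt ?_⟩
      · rw [Fin.lt_def]; show (c:ℕ) < k; exact c.isLt
      · rw [← hp]
        rw [Fin.lt_def, pat_castAdd, pat_val_k1 v B rfl]
        exact (v c).isLt
    have hinj : Function.Injective (fun c : Fin k => f (Fin.castAdd 2 c)) := by
      intro a b h
      have := hf.injective h
      exact Fin.castAdd_injective _ _ this
    have hcard : (Finset.univ.image (fun c : Fin k => f (Fin.castAdd 2 c))).card = k := by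
      rw [Finset.card_image_of_injective _ hinj, Finset.card_univ, Fintype.card_fin]
    calc k = _ := hcard.symm
      _ ≤ _ := Finset.card_le_card hsub
  obtain ⟨i', j', hE, hr⟩ := climb (k := k) w ((n - (f A : ℕ)) + (n - (w (f B) : ℕ)))
    (f A) (w (f B)) le_rfl hDcell hrkcell
  exact ⟨i', j', hE, hr⟩

lemma cell_to_contains {n k : ℕ} (w : Equiv.Perm (Fin n)) (i j : Fin n)
    (hD : inD w i j) (hrk : k ≤ rk w i j) :
    ∃ v : Equiv.Perm (Fin k), containsPattern w (pat v) := by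
  obtain ⟨hji, hij⟩ := hD
  obtain ⟨S, hS, hScard⟩ := Finset.exists_subset_card_eq hrk
  set e := S.orderIsoOfFin hScard with he
  set p : Fin k → Fin n := fun c => (e c : Fin n) with hpdef
  have hpmono : StrictMono p := fun a b h => Subtype.coe_lt_coe.2 (e.lt_iff_lt.2 h)
  have hpi : ∀ c, p c ≤ i ∧ w (p c) ≤ j := by
    intro c
    have hm := hS (e c).2
    simpa using (Finset.mem_filter.1 hm).2
  have hplt : ∀ c, p c < i := by
    intro c
    refine lt_of_le_of_ne (hpi c).1 (fun h => ?_)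
    have : w (p c) ≤ j := (hpi c).2
    rw [h] at this
    exact absurd hji (not_lt.2 this)
  have hwlt : ∀ c, w (p c) < j := by
    intro c
    refine lt_of_le_of_ne (hpi c).2 (fun h => ?_)
    have : p c = w.symm j := by rw [← h, Equiv.symm_apply_apply]
    have h2 : i < p c := by rw [this]; exact hij
    exact absurd (hpi c).1 (not_le.2 h2)
  set W : Fin k → Fin n := fun c => w (p c) with hWdef
  have hWinj : Function.Injective W := fun a b h => hpmono.injective (w.injective h)
  have hVcard : (Finset.univ.image W).card = k := by
    rw [Finset.card_image_of_injective _ hWinj, Finset.card_univ, Fintype.card_fin]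
  set e2 := (Finset.univ.image W).orderIsoOfFin hVcard with he2
  have hmemV : ∀ c, W c ∈ Finset.univ.image W :=
    fun c => Finset.mem_image_of_mem _ (Finset.mem_univ c)
  set vf : Fin k → Fin k := fun c => e2.symm ⟨W c, hmemV c⟩ with hvfdef
  have hvf : ∀ a b, vf a < vf b ↔ W a < W b := by
    intro a b
    rw [hvfdef]
    simp only []
    rw [e2.symm.lt_iff_lt]
    exact Subtype.mk_lt_mk
  have hvfinj : Function.Injective vf := fun a b h =>
    hWinj (Subtype.mk_eq_mk.1 (e2.symm.injective h))
  set v : Equiv.Perm (Fin k) := Equiv.ofBijective vf (Finite.injective_iff_bijective.1 hvfinj)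
    with hvdef
  have hv : ∀ c, v c = vf c := fun c => rfl
  classical
  set f : Fin (k+2) → Fin n := fun c =>
    if h : (c:ℕ) < k then p ⟨(c:ℕ), h⟩ else if (c:ℕ) = k then i else w.symm j with hfdef
  have hfval1 : ∀ (c : Fin (k+2)) (h : (c:ℕ) < k), f c = p ⟨(c:ℕ), h⟩ := by
    intro c h; rw [hfdef]; exact dif_pos h
  have hfval2 : ∀ (c : Fin (k+2)), (c:ℕ) = k → f c = i := by
    intro c h; rw [hfdef]; simp only []; rw [dif_neg (by omega), if_pos h]
  have hfval3 : ∀ (c : Fin (k+2)), (c:ℕ) = k+1 → f c = w.symm j := by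
    intro c h; rw [hfdef]; simp only []; rw [dif_neg (by omega), if_neg (by omega)]
  have hfmono : StrictMono f := by
    intro a b hab
    have hab' : (a:ℕ) < (b:ℕ) := Fin.lt_def.1 hab
    have hb2 := b.isLt
    by_cases ha : (a:ℕ) < k
    · rw [hfval1 a ha]
      by_cases hbk : (b:ℕ) < k
      · rw [hfval1 b hbk]
        exact hpmono (by rw [Fin.lt_def]; exact hab')
      · by_cases hbk1 : (b:ℕ) = k
        · rw [hfval2 b hbk1]; exact hplt _
        · rw [hfval3 b (by omega)]; exact lt_trans (hplt _) hij
    · have hak : (a:ℕ) = k := by omega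
      have hbk1 : (b:ℕ) = k+1 := by omega
      rw [hfval2 a hak, hfval3 b hbk1]; exact hij
  refine ⟨v, f, hfmono, ?_⟩
  intro x y
  have hx2 := x.isLt
  have hy2 := y.isLt
  have hwj : w (w.symm j) = j := Equiv.apply_symm_apply w j
  by_cases hx : (x:ℕ) < k
  · rw [hfval1 x hx]
    by_cases hy : (y:ℕ) < k
    · rw [hfval1 y hy]
      rw [Fin.lt_def, pat_val_lt v x hx, pat_val_lt v y hy, ← Fin.lt_def]
      rw [hv, hv, hvf]
    · by_cases hyk : (y:ℕ) = k
      · rw [hfval2 y hyk]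
        refine iff_of_true ?_ (lt_trans (hwlt _) hji)
        rw [Fin.lt_def, pat_val_lt v x hx, pat_val_k v y hyk]
        have := (v ⟨(x:ℕ), hx⟩).isLt; omega
      · have hyk1 : (y:ℕ) = k+1 := by omega
        rw [hfval3 y hyk1]
        refine iff_of_true ?_ (by rw [hwj]; exact hwlt _)
        rw [Fin.lt_def, pat_val_lt v x hx, pat_val_k1 v y hyk1]
        exact (v ⟨(x:ℕ), hx⟩).isLt
  · by_cases hxk : (x:ℕ) = k
    · rw [hfval2 x hxk]
      by_cases hy : (y:ℕ) < k
      · rw [hfval1 y hy]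
        refine iff_of_false ?_ (not_lt.2 (le_of_lt (lt_trans (hwlt _) hji)))
        rw [Fin.lt_def, pat_val_k v x hxk, pat_val_lt v y hy]
        have := (v ⟨(y:ℕ), hy⟩).isLt; omega
      · by_cases hyk : (y:ℕ) = k
        · have hxy : x = y := Fin.ext (by omega)
          rw [hxy, hfval2 y hyk]
          exact iff_of_false (lt_irrefl _) (lt_irrefl _)
        · have hyk1 : (y:ℕ) = k+1 := by omega
          rw [hfval3 y hyk1]
          refine iff_of_false ?_ (by rw [hwj]; exact not_lt.2 (le_of_lt hji))
          rw [Fin.lt_def, pat_val_k v x hxk, pat_val_k1 v y hyk1]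
          omega
    · have hxk1 : (x:ℕ) = k+1 := by omega
      rw [hfval3 x hxk1]
      by_cases hy : (y:ℕ) < k
      · rw [hfval1 y hy]
        refine iff_of_false ?_ (by rw [hwj]; exact not_lt.2 (le_of_lt (hwlt _)))
        rw [Fin.lt_def, pat_val_k1 v x hxk1, pat_val_lt v y hy]
        have := (v ⟨(y:ℕ), hy⟩).isLt; omega
      · by_cases hyk : (y:ℕ) = k
        · rw [hfval2 y hyk]
          refine iff_of_true ?_ (by rw [hwj]; exact hji)
          rw [Fin.lt_def, pat_val_k1 v x hxk1, pat_val_k v y hyk]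
          omega
        · have hyk1 : (y:ℕ) = k+1 := by omega
          have hxy : x = y := Fin.ext (by omega)
          rw [hxy, hfval3 y hyk1]
          exact iff_of_false (lt_irrefl _) (lt_irrefl _)

/-- `r_w < k` on the essential set iff `w` avoids all patterns `v(k+2)(k+1)`, `v ∈ S_k`. -/
theorem stmt2 (n k : ℕ) (w : Equiv.Perm (Fin n)) :
    (∀ i j : Fin n, inEss w i j → rk w i j < k) ↔
      ∀ v : Equiv.Perm (Fin k), ¬ containsPattern w (pat v) := by
  constructor
  · intro h v hc
    obtain ⟨i, j, hE, hr⟩ := contains_to_cell w v hc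
    exact absurd (h i j hE) (not_lt.2 hr)
  · intro h i j hE
    by_contra hlt
    push_neg at hlt
    obtain ⟨v, hc⟩ := cell_to_contains w i j hE.1 hlt
    exact h v hc
end

section
/- A permutation w ∈ S_n satisfies r_w(i,j) ≤ 1 for every (i,j) in the essential set E(w) if and only if w avoids the patterns 1243 and 2143. -/
/-- Rank is unchanged moving down one row within the diagram. -/
lemma rk_row {n : ℕ} (w : Equiv.Perm (Fin n)) {i i' j : Fin n}
    (h : (i' : ℕ) = (i : ℕ) + 1) (hD : inD w i' j) : rk w i' j = rk w i j := by
  unfold rk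
  congr 1
  apply Finset.filter_congr
  intro a _
  simp only [Fin.le_def]
  constructor
  · rintro ⟨h1, h2⟩
    refine ⟨?_, h2⟩
    rcases eq_or_lt_of_le h1 with heq | hlt
    · exfalso
      have : a = i' := Fin.ext heq
      subst this
      have := Fin.lt_def.mp hD.1
      omega
    · omega
  · rintro ⟨h1, h2⟩; exact ⟨by omega, h2⟩

/-- Rank is unchanged moving right one column within the diagram. -/
lemma rk_col {n : ℕ} (w : Equiv.Perm (Fin n)) {i j j' : Fin n}
    (h : (j' : ℕ) = (j : ℕ) + 1) (hD : inD w i j') : rk w i j' = rk w i j := by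
  unfold rk
  congr 1
  apply Finset.filter_congr
  intro a _
  simp only [Fin.le_def]
  constructor
  · rintro ⟨h1, h2⟩
    refine ⟨h1, ?_⟩
    rcases eq_or_lt_of_le h2 with heq | hlt
    · exfalso
      have : w a = j' := Fin.ext heq
      have ha : a = w.symm j' := by rw [← this, Equiv.symm_apply_apply]
      have := hD.2
      rw [← ha] at this
      exact absurd (Fin.le_def.mpr h1) (not_le.2 this)
    · omega
  · rintro ⟨h1, h2⟩; exact ⟨h1, by omega⟩

/-- If rank is at most 1 on the essential set, it is at most 1 on the whole diagram. -/
lemma ess_reduce {n : ℕ} (w : Equiv.Perm (Fin n))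
    (hE : ∀ i j : Fin n, inEss w i j → rk w i j ≤ 1) :
    ∀ i j : Fin n, inD w i j → rk w i j ≤ 1 := by
  suffices h : ∀ N : ℕ, ∀ i j : Fin n, (n - (i:ℕ)) + (n - (j:ℕ)) ≤ N → inD w i j → rk w i j ≤ 1 by
    intro i j hD; exact h _ i j le_rfl hD
  intro N
  induction N with
  | zero =>
    intro i j hle _
    have := i.isLt; have := j.isLt; omega
  | succ N ih =>
    intro i j hle hD
    by_cases hess : inEss w i j
    · exact hE i j hess
    · have hnot : ¬ ((∀ i' : Fin n, (i' : ℕ) = (i : ℕ) + 1 → ¬ inD w i' j) ∧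
          (∀ j' : Fin n, (j' : ℕ) = (j : ℕ) + 1 → ¬ inD w i j')) :=
        fun hc => hess ⟨hD, hc⟩
      rcases not_and_or.mp hnot with hrow | hcol
      · push_neg at hrow
        obtain ⟨i', hi', hD'⟩ := hrow
        have hik : (i:ℕ) < n := i.isLt
        have hik' : (i':ℕ) < n := i'.isLt
        rw [← rk_row w hi' hD']
        exact ih i' j (by omega) hD'
      · push_neg at hcol
        obtain ⟨j', hj', hD'⟩ := hcol
        have : (j':ℕ) < n := j'.isLt
        rw [← rk_col w hj' hD']
        exact ih i j' (by omega) hD'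

/-- A diagram cell with rank at least 2 is the same as a `**(d)(c)` configuration. -/
lemma diagC {n : ℕ} (w : Equiv.Perm (Fin n)) :
    (∃ i j : Fin n, inD w i j ∧ 2 ≤ rk w i j) ↔
      ∃ a b c d : Fin n, a < b ∧ b < c ∧ c < d ∧ w a < w d ∧ w b < w d ∧ w d < w c := by
  constructor
  · rintro ⟨i, j, hD, hrk⟩
    have key : ∀ a b : Fin n, a < b → (a ≤ i ∧ w a ≤ j) → (b ≤ i ∧ w b ≤ j) →
        ∃ a b c d : Fin n, a < b ∧ b < c ∧ c < d ∧ w a < w d ∧ w b < w d ∧ w d < w c := by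
      rintro a b hab ⟨hai, haj⟩ ⟨hbi, hbj⟩
      have hwd : w (w.symm j) = j := Equiv.apply_symm_apply w j
      have hbc : b < i := by
        rcases lt_or_eq_of_le hbi with h | h
        · exact h
        · subst h; exact absurd hbj (not_le.2 hD.1)
      have hcd : i < w.symm j := hD.2
      have had : a ≠ w.symm j := ne_of_lt (lt_of_le_of_lt hai hcd)
      have hbd : b ≠ w.symm j := ne_of_lt (lt_of_le_of_lt hbi hcd)
      refine ⟨a, b, i, w.symm j, hab, hbc, hcd, ?_, ?_, ?_⟩
      · rw [hwd]
        exact lt_of_le_of_ne haj (fun h => had (by rw [← hwd] at h; exact w.injective h))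
      · rw [hwd]
        exact lt_of_le_of_ne hbj (fun h => hbd (by rw [← hwd] at h; exact w.injective h))
      · rw [hwd]; exact hD.1
    have h2 : 1 < (Finset.univ.filter (fun a : Fin n => a ≤ i ∧ w a ≤ j)).card := hrk
    obtain ⟨a, ha, b, hb, hab⟩ := Finset.one_lt_card.mp h2
    simp only [Finset.mem_filter, Finset.mem_univ, true_and] at ha hb
    rcases lt_or_gt_of_ne hab with h | h
    · exact key a b h ha hb
    · exact key b a h hb ha
  · rintro ⟨a, b, c, d, hab, hbc, hcd, h1, h2, h3⟩
    refine ⟨c, w d, ⟨h3, ?_⟩, ?_⟩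
    · rw [Equiv.symm_apply_apply]; exact hcd
    · apply Finset.one_lt_card.mpr
      refine ⟨a, ?_, b, ?_, ne_of_lt hab⟩ <;>
        simp only [Finset.mem_filter, Finset.mem_univ, true_and]
      · exact ⟨le_of_lt (hab.trans hbc), le_of_lt h1⟩
      · exact ⟨le_of_lt hbc, le_of_lt h2⟩

lemma contains1243_iff {n : ℕ} (w : Equiv.Perm (Fin n)) :
    containsPattern w p1243 ↔
      ∃ a b c d : Fin n, a < b ∧ b < c ∧ c < d ∧ w a < w b ∧ w b < w d ∧ w d < w c := by
  constructor
  · rintro ⟨f, hf, hiff⟩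
    refine ⟨f 0, f 1, f 2, f 3, hf (by decide), hf (by decide), hf (by decide), ?_, ?_, ?_⟩
    · exact (hiff 0 1).mp (by decide)
    · exact (hiff 1 3).mp (by decide)
    · exact (hiff 3 2).mp (by decide)
  · rintro ⟨a, b, c, d, hab, hbc, hcd, h1, h2, h3⟩
    have H1 := Fin.lt_def.mp h1
    have H2 := Fin.lt_def.mp h2
    have H3 := Fin.lt_def.mp h3
    refine ⟨![a, b, c, d], ?_, ?_⟩
    · intro x y hxy
      fin_cases x <;> fin_cases y <;> simp only [Fin.isValue, Matrix.cons_val_zero,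
        Matrix.cons_val_one, Matrix.head_cons, Matrix.cons_val_two, Matrix.tail_cons,
        Matrix.cons_val_three] at hxy ⊢ <;> first
        | exact absurd hxy (by decide)
        | exact hab | exact hbc | exact hcd
        | exact hab.trans hbc | exact hbc.trans hcd | exact (hab.trans hbc).trans hcd
    · intro x y
      fin_cases x <;> fin_cases y <;> simp <;> first
        | exact iff_of_true (by decide) (by simp only [Fin.lt_def]; omega)
        | exact iff_of_false (by decide) (by simp only [Fin.lt_def]; omega)

lemma contains2143_iff {n : ℕ} (w : Equiv.Perm (Fin n)) :
    containsPattern w p2143 ↔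
      ∃ a b c d : Fin n, a < b ∧ b < c ∧ c < d ∧ w b < w a ∧ w a < w d ∧ w d < w c := by
  constructor
  · rintro ⟨f, hf, hiff⟩
    refine ⟨f 0, f 1, f 2, f 3, hf (by decide), hf (by decide), hf (by decide), ?_, ?_, ?_⟩
    · exact (hiff 1 0).mp (by decide)
    · exact (hiff 0 3).mp (by decide)
    · exact (hiff 3 2).mp (by decide)
  · rintro ⟨a, b, c, d, hab, hbc, hcd, h1, h2, h3⟩
    have H1 := Fin.lt_def.mp h1
    have H2 := Fin.lt_def.mp h2
    have H3 := Fin.lt_def.mp h3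
    refine ⟨![a, b, c, d], ?_, ?_⟩
    · intro x y hxy
      fin_cases x <;> fin_cases y <;> simp only [Fin.isValue, Matrix.cons_val_zero,
        Matrix.cons_val_one, Matrix.head_cons, Matrix.cons_val_two, Matrix.tail_cons,
        Matrix.cons_val_three] at hxy ⊢ <;> first
        | exact absurd hxy (by decide)
        | exact hab | exact hbc | exact hcd
        | exact hab.trans hbc | exact hbc.trans hcd | exact (hab.trans hbc).trans hcd
    · intro x y
      fin_cases x <;> fin_cases y <;> simp <;> first
        | exact iff_of_true (by decide) (by simp only [Fin.lt_def]; omega)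
        | exact iff_of_false (by decide) (by simp only [Fin.lt_def]; omega)

/-- `r_w ≤ 1` on the essential set iff `w` avoids `1243` and `2143`. -/
theorem stmt3 (n : ℕ) (w : Equiv.Perm (Fin n)) :
    (∀ i j : Fin n, inEss w i j → rk w i j ≤ 1) ↔
      (¬ containsPattern w p1243 ∧ ¬ containsPattern w p2143) := by
  constructor
  · intro hE
    have hdiag := ess_reduce w hE
    constructor
    · intro hc
      obtain ⟨a, b, c, d, hab, hbc, hcd, h1, h2, h3⟩ := (contains1243_iff w).mp hc
      obtain ⟨i, j, hD, hrk⟩ := (diagC w).mpr ⟨a, b, c, d, hab, hbc, hcd, h1.trans h2, h2, h3⟩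
      exact absurd (hdiag i j hD) (by omega)
    · intro hc
      obtain ⟨a, b, c, d, hab, hbc, hcd, h1, h2, h3⟩ := (contains2143_iff w).mp hc
      obtain ⟨i, j, hD, hrk⟩ := (diagC w).mpr ⟨a, b, c, d, hab, hbc, hcd, h2, h1.trans h2, h3⟩
      exact absurd (hdiag i j hD) (by omega)
  · rintro ⟨hp1, hp2⟩ i j hess
    by_contra hgt
    have hrk : 2 ≤ rk w i j := by omega
    obtain ⟨a, b, c, d, hab, hbc, hcd, h1, h2, h3⟩ := (diagC w).mp ⟨i, j, hess.1, hrk⟩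
    have hne : w a ≠ w b := fun h => (ne_of_lt hab) (w.injective h)
    rcases lt_or_gt_of_ne hne with h | h
    · exact hp1 ((contains1243_iff w).mpr ⟨a, b, c, d, hab, hbc, hcd, h, h2, h3⟩)
    · exact hp2 ((contains2143_iff w).mpr ⟨a, b, c, d, hab, hbc, hcd, h, h1, h3⟩)
end

section
/- If a permutation w ∈ S_n contains the pattern 2143 (i.e., w is not vexillary), then there exist elements (i,j) and (i',j') of the essential set E(w) with i < i' and j < j'. -/
lemma key_ess {n : ℕ} (w : Equiv.Perm (Fin n)) (a b : Fin n) (hab : a < b) (hw : w b < w a) :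
    ∃ i j : Fin n, inEss w i j ∧ a ≤ i ∧ i < b ∧ w b ≤ j ∧ j < w a := by
  classical
  set S : Finset (Fin n × Fin n) :=
    Finset.univ.filter (fun p => inD w p.1 p.2 ∧ a ≤ p.1 ∧ p.1 < b ∧ w b ≤ p.2 ∧ p.2 < w a)
    with hS
  have hmem : (a, w b) ∈ S := by
    simp only [hS, Finset.mem_filter, Finset.mem_univ, true_and]
    refine ⟨⟨hw, ?_⟩, le_refl _, hab, le_refl _, hw⟩
    simpa using hab
  obtain ⟨p, hpS, hpmax⟩ :=
    S.exists_max_image (fun p => (p.1 : ℕ) + (p.2 : ℕ)) ⟨_, hmem⟩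
  obtain ⟨i, j⟩ := p
  simp only [hS, Finset.mem_filter, Finset.mem_univ, true_and] at hpS
  obtain ⟨hD, hai, hib, hbj, hja⟩ := hpS
  refine ⟨i, j, ⟨hD, ?_, ?_⟩, hai, hib, hbj, hja⟩
  · intro i' hi' hD'
    by_cases hb : i' < b
    · have hmem' : (i', j) ∈ S := by
        simp only [hS, Finset.mem_filter, Finset.mem_univ, true_and]
        refine ⟨hD', ?_, hb, hbj, hja⟩
        have := hai
        simp only [Fin.le_def] at this ⊢
        omega
      have := hpmax _ hmem'
      simp only [hi'] at this
      omega
    · have hib' : i' = b := by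
        apply Fin.ext
        simp only [Fin.lt_def, not_lt, Fin.le_def] at hb hib
        omega
      rw [hib'] at hD'
      exact absurd hD'.1 (not_lt.mpr hbj)
  · intro j' hj' hD'
    by_cases hc : j' < w a
    · have hmem' : (i, j') ∈ S := by
        simp only [hS, Finset.mem_filter, Finset.mem_univ, true_and]
        refine ⟨hD', hai, hib, ?_, hc⟩
        have := hbj
        simp only [Fin.le_def] at this ⊢
        omega
      have := hpmax _ hmem'
      simp only [hj'] at this
      omega
    · have hja' : j' = w a := by
        apply Fin.ext
        simp only [Fin.lt_def, not_lt, Fin.le_def] at hc hja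
        omega
      rw [hja'] at hD'
      have := hD'.2
      rw [Equiv.symm_apply_apply] at this
      exact absurd this (not_lt.mpr hai)

/-- If `w` contains `2143`, then some element of `E(w)` is strictly southeast of another. -/
theorem stmt4 (n : ℕ) (w : Equiv.Perm (Fin n)) (h : containsPattern w p2143) :
    ∃ i j i' j' : Fin n, inEss w i j ∧ inEss w i' j' ∧ i < i' ∧ j < j' := by
  obtain ⟨f, hf, hpat⟩ := h
  have h10 : w (f 1) < w (f 0) := (hpat 1 0).mp (by decide)
  have h03 : w (f 0) < w (f 3) := (hpat 0 3).mp (by decide)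
  have h32 : w (f 3) < w (f 2) := (hpat 3 2).mp (by decide)
  obtain ⟨i, j, hE, hai, hib, hbj, hja⟩ :=
    key_ess w (f 0) (f 1) (hf (by decide)) h10
  obtain ⟨i', j', hE', hci, hid, hdj, hjc⟩ :=
    key_ess w (f 2) (f 3) (hf (by decide)) h32
  refine ⟨i, j, i', j', hE, hE', ?_, ?_⟩
  · exact lt_of_lt_of_le hib (le_trans (le_of_lt (hf (by decide : (1:Fin 4) < 2))) hci)
  · exact lt_of_lt_of_le hja (le_trans (le_of_lt h03) hdj)
end

section
/- If w ∈ S_n is vexillary (avoids the pattern 2143), then the essential set E(w) is totally ordered under the relation (i,j) ≼ (i',j') iff i ≥ i' and j ≤ j'; that is, for any two elements (i,j), (i',j') of E(w), either (i ≥ i' and j ≤ j') or (i ≤ i' and j ≥ j'). -/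
/-
If essential cells `(i, j)` and `(i', j')` had `i < i'` and `j < j'`, the positions
`w⁻¹(j + 1) < i + 1 < i' < w⁻¹(j')` would carry values ordered as
`w(i + 1) < j + 1 < j' < w(i')`, a `2143` pattern. Essentiality of `(i, j)` is what forces
`w(i + 1) ≤ j` and `w⁻¹(j + 1) ≤ i`.
-/

lemma containsPattern_of_strictMono {n m : ℕ} {w : Equiv.Perm (Fin n)} {v : Equiv.Perm (Fin m)}
    {f φ : Fin m → Fin n} (hf : StrictMono f) (hφ : StrictMono φ) (hfφ : ∀ k, w (f k) = φ (v k)) :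
    containsPattern w v :=
  ⟨f, hf, fun a b => by rw [hfφ, hfφ, hφ.lt_iff_lt]⟩

lemma containsPattern_p2143 {n : ℕ} {w : Equiv.Perm (Fin n)} {a b c d : Fin n}
    (hab : a < b) (hbc : b < c) (hcd : c < d) (hba : w b < w a) (had : w a < w d)
    (hdc : w d < w c) : containsPattern w p2143 := by
  refine containsPattern_of_strictMono (f := ![a, b, c, d]) (φ := ![w b, w a, w d, w c])
    ?_ ?_ ?_
  · exact Fin.strictMono_iff_lt_succ.2 fun k => by fin_cases k <;> assumption
  · exact Fin.strictMono_iff_lt_succ.2 fun k => by fin_cases k <;> assumption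
  · intro k; fin_cases k <;> rfl

lemma inD_symm_iff {n : ℕ} {w : Equiv.Perm (Fin n)} {i j : Fin n} :
    inD w.symm j i ↔ inD w i j := by
  simp only [inD, Equiv.symm_symm, and_comm]

lemma inEss_symm_iff {n : ℕ} {w : Equiv.Perm (Fin n)} {i j : Fin n} :
    inEss w.symm j i ↔ inEss w i j := by
  simp only [inEss, inD_symm_iff]
  exact and_congr_right' and_comm

lemma inEss.apply_succ_le {n : ℕ} {w : Equiv.Perm (Fin n)} {i j i₁ : Fin n} (hE : inEss w i j)
    (hi₁ : (i₁ : ℕ) = i + 1) : w i₁ ≤ j := by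
  by_contra! hj
  have hi : w.symm j = i₁ := by
    by_contra hne
    refine hE.2.1 i₁ hi₁ ⟨hj, ?_⟩
    have := hE.1.2
    rw [Fin.lt_def] at this ⊢
    omega
  exact hj.ne' (by rw [← hi, Equiv.apply_symm_apply])

lemma inEss.symm_succ_le {n : ℕ} {w : Equiv.Perm (Fin n)} {i j j₁ : Fin n} (hE : inEss w i j)
    (hj₁ : (j₁ : ℕ) = j + 1) : w.symm j₁ ≤ i :=
  inEss.apply_succ_le (inEss_symm_iff.2 hE) hj₁

lemma containsPattern_p2143_of_inEss_of_inD {n : ℕ} {w : Equiv.Perm (Fin n)} {i j i' j' : Fin n}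
    (hE : inEss w i j) (hD : inD w i' j') (hi : i < i') (hj : j < j') :
    containsPattern w p2143 := by
  have hi₁ : (i : ℕ) + 1 < n := by have := hE.1.2; have := (w.symm j).isLt; omega
  have hj₁ : (j : ℕ) + 1 < n := by have := hE.1.1; have := (w i).isLt; omega
  set i₁ : Fin n := ⟨i + 1, hi₁⟩
  set j₁ : Fin n := ⟨j + 1, hj₁⟩
  have hwi₁ : w i₁ ≤ j := hE.apply_succ_le rfl
  have hwj₁ : w.symm j₁ ≤ i := hE.symm_succ_le rfl
  have hi₁i' : i₁ < i' := by
    refine lt_of_le_of_ne (Fin.le_def.2 (Nat.succ_le_of_lt hi)) fun h => ?_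
    exact (hD.1.trans_le (h ▸ hwi₁)).not_gt hj
  have hj₁j' : j₁ < j' := by
    refine lt_of_le_of_ne (Fin.le_def.2 (Nat.succ_le_of_lt hj)) fun h => ?_
    exact (hD.2.trans_le (h ▸ hwj₁)).not_gt hi
  refine containsPattern_p2143 (a := w.symm j₁) (b := i₁) (c := i') (d := w.symm j')
    (hwj₁.trans_lt (Fin.lt_def.2 (Nat.lt_succ_self _))) hi₁i' hD.2 ?_ ?_ ?_
  · rw [Equiv.apply_symm_apply]; exact hwi₁.trans_lt (Fin.lt_def.2 (Nat.lt_succ_self _))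
  · rwa [Equiv.apply_symm_apply, Equiv.apply_symm_apply]
  · rw [Equiv.apply_symm_apply]; exact hD.1

/-- If `w` is vexillary, `E(w)` is totally ordered southwest-to-northeast. -/
theorem stmt5 (n : ℕ) (w : Equiv.Perm (Fin n)) (h : ¬ containsPattern w p2143) :
    ∀ i j i' j' : Fin n, inEss w i j → inEss w i' j' →
      (i' ≤ i ∧ j ≤ j') ∨ (i ≤ i' ∧ j' ≤ j) := by
  intro i j i' j' hE hE'
  have h₁ : ¬ (i < i' ∧ j < j') := fun ⟨hi, hj⟩ =>
    h (containsPattern_p2143_of_inEss_of_inD hE hE'.1 hi hj)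
  have h₂ : ¬ (i' < i ∧ j' < j) := fun ⟨hi, hj⟩ =>
    h (containsPattern_p2143_of_inEss_of_inD hE' hE.1 hi hj)
  simp only [Fin.lt_def, Fin.le_def] at h₁ h₂ ⊢
  omega
end

section
/- Let w ∈ S_n and suppose (i,j) ∈ E(w) satisfies r_w(i,j) ≥ k. Then w contains a pattern of the form v(k+2)(k+1) for some v ∈ S_k; explicitly, there exist indices a_1 < a_2 < ... < a_k < i < a with w(a_t) < j for all t ≤ k, w(i) > j, and w(a) = j. -/
/-- If `(i,j) ∈ E(w)` has `r_w(i,j) ≥ k`, then `w` contains a pattern `v(k+2)(k+1)`: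
there are `a_1 < … < a_k < i < A` with `w(a_t) < j`, `w(i) > j`, `w(A) = j`. -/
theorem stmt6 (n k : ℕ) (w : Equiv.Perm (Fin n)) (i j : Fin n)
    (hE : inEss w i j) (hr : k ≤ rk w i j) :
    ∃ a : Fin k → Fin n, ∃ A : Fin n, StrictMono a ∧ (∀ t, a t < i) ∧ i < A ∧
      (∀ t, w (a t) < j) ∧ j < w i ∧ w A = j := by
  obtain ⟨⟨hji, hii⟩, -, -⟩ := hE
  set S := Finset.univ.filter (fun a : Fin n => a ≤ i ∧ w a ≤ j) with hS
  have hr' : k ≤ S.card := hr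
  refine ⟨fun t => S.orderEmbOfCardLe hr' t, w.symm j, fun s t hst => ?_, ?_, hii, ?_, hji, w.apply_symm_apply j⟩
  · exact (S.orderEmbOfCardLe hr').strictMono hst
  · intro t
    have hm := Finset.orderEmbOfCardLe_mem S hr' t
    simp only [S, Finset.mem_filter] at hm
    obtain ⟨-, hle, hwle⟩ := hm
    rcases lt_or_eq_of_le hle with h | h
    · exact h
    · exact absurd hji (by rw [← h]; exact not_lt.2 hwle)
  · intro t
    have hm := Finset.orderEmbOfCardLe_mem S hr' t
    simp only [S, Finset.mem_filter] at hm
    obtain ⟨-, hle, hwle⟩ := hm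
    rcases lt_or_eq_of_le hwle with h | h
    · exact h
    · exfalso
      have : (S.orderEmbOfCardLe hr' t : Fin n) = w.symm j := by
        rw [← h]; exact (w.symm_apply_apply _).symm
      exact absurd hii (not_lt.2 (this ▸ hle))
end

section
/- Let w ∈ S_n and suppose there exist indices a_1 < a_2 < ... < a_{k+2} such that w(a_i) < w(a_{k+2}) for all i ≤ k and w(a_{k+1}) > w(a_{k+2}). Then the cell (a_{k+1}, w(a_{k+2})) lies in the Rothe diagram D(w) and r_w(a_{k+1}, w(a_{k+2})) ≥ k. -/
/-- If `a_1 < … < a_k < p < q` with `w(a_t) < w(q) < w(p)`, then the cell `(p, w(q))`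
lies in `D(w)` and `r_w(p, w(q)) ≥ k`. -/
theorem stmt7 (n k : ℕ) (w : Equiv.Perm (Fin n)) (a : Fin k → Fin n) (p q : Fin n)
    (ha : StrictMono a) (h1 : ∀ t, a t < p) (h2 : p < q)
    (h3 : ∀ t, w (a t) < w q) (h4 : w q < w p) :
    inD w p (w q) ∧ k ≤ rk w p (w q) := by
  refine ⟨⟨h4, by rw [Equiv.symm_apply_apply]; exact h2⟩, ?_⟩
  have hsub : Finset.univ.image a ⊆
      Finset.univ.filter (fun x : Fin n => x ≤ p ∧ w x ≤ w q) := by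
    intro x hx
    simp only [Finset.mem_image] at hx
    obtain ⟨t, _, rfl⟩ := hx
    exact Finset.mem_filter.mpr ⟨Finset.mem_univ _, (h1 t).le, (h3 t).le⟩
  calc k = (Finset.univ.image a).card := by
        rw [Finset.card_image_of_injective _ ha.injective, Finset.card_univ,
          Fintype.card_fin]
    _ ≤ _ := Finset.card_le_card hsub
end

section
/- Let w ∈ S_n. If a permutation matrix cell (i_d, j_d) lies in D(w), (i_a, j) ∈ D(w) implies r_w(i_a, j) ≥ a whenever j ≥ j_d, and w(i_{c'}) < j_d for indices c' with (i_{c'}, j_d) ∉ D(w), i_{c'} < i_d, then r_w(i_a, j_d) ≥ a. Formally: suppose i_1 < ... < i_d, (i_d, j_d) ∈ D(w), and for each c ≤ a either (i_c, j_d) ∈ D(w) with r_w(i_c, j_d) ≥ c, or w(i_c) < j_d. Then r_w(i_a, j_d) ≥ a. -/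
theorem rk_pos_of_apply_le {n : ℕ} {w : Equiv.Perm (Fin n)} {i j : Fin n} (h : w i ≤ j) :
    0 < rk w i j :=
  Finset.card_pos.mpr ⟨i, by simp [h]⟩

theorem rk_lt_rk_of_lt_of_apply_le {n : ℕ} {w : Equiv.Perm (Fin n)} {i i' j : Fin n}
    (hi : i < i') (h : w i' ≤ j) : rk w i j < rk w i' j := by
  refine Finset.card_lt_card ⟨fun x hx => ?_, fun hsub => ?_⟩
  · simp only [Finset.mem_filter, Finset.mem_univ, true_and] at hx ⊢
    exact ⟨hx.1.trans hi.le, hx.2⟩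
  · have hmem : i' ∈ Finset.univ.filter (fun x : Fin n => x ≤ i' ∧ w x ≤ j) := by simp [h]
    simpa [hi.not_ge] using hsub hmem

theorem stmt15_general (n d : ℕ) (w : Equiv.Perm (Fin n)) (idx : Fin (d + 1) → Fin n) (jd : Fin n)
    (hmono : StrictMono idx) (a : Fin (d + 1))
    (hdich : ∀ c : Fin (d + 1), c ≤ a →
      (inD w (idx c) jd ∧ (c : ℕ) + 1 ≤ rk w (idx c) jd) ∨ w (idx c) < jd) :
    (a : ℕ) + 1 ≤ rk w (idx a) jd := by
  induction a using Fin.induction with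
  | zero =>
    rcases hdich 0 le_rfl with ⟨-, h⟩ | h
    · exact h
    · exact rk_pos_of_apply_le h.le
  | succ b ih =>
    rcases hdich b.succ le_rfl with ⟨-, h⟩ | h
    · exact h
    · have hb := ih fun c hc => hdich c (hc.trans Fin.castSucc_lt_succ.le)
      have hstep := rk_lt_rk_of_lt_of_apply_le (hmono Fin.castSucc_lt_succ) h.le
      simp only [Fin.val_succ, Fin.val_castSucc] at hb ⊢
      omega

/-- Given `i_1 < … < i_{d+1}` with `(i_{d+1}, j_d) ∈ D(w)`, if for each `c ≤ a` either
`(i_c, j_d) ∈ D(w)` with `r_w(i_c, j_d) ≥ c`, or `w(i_c) < j_d`, then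
`r_w(i_a, j_d) ≥ a` (1-indexed ranks; here indices are 0-indexed so the bound is `c+1`). -/
theorem stmt15 (n d : ℕ) (w : Equiv.Perm (Fin n)) (idx : Fin (d + 1) → Fin n) (jd : Fin n)
    (hmono : StrictMono idx) (hD : inD w (idx (Fin.last d)) jd) (a : Fin (d + 1))
    (hdich : ∀ c : Fin (d + 1), c ≤ a →
      (inD w (idx c) jd ∧ (c : ℕ) + 1 ≤ rk w (idx c) jd) ∨ w (idx c) < jd) :
    (a : ℕ) + 1 ≤ rk w (idx a) jd :=
  stmt15_general n d w idx jd hmono a hdich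
end

section
/- For a partition λ, let C_λ be the longest antidiagonal {(k,1),(k-1,2),...,(1,k)} contained in the Young diagram of λ, i.e., |C_λ| is the largest k such that (k-i+1, i) ∈ λ for all 1 ≤ i ≤ k. Then |C_λ| equals the maximum size of a matching in the bipartite graph B_λ whose edges are the cells of λ (equivalently, the maximum number of cells of λ no two in the same row or column). -/
/-- `|C_λ|`: the largest `k` such that the antidiagonal staircase
`{(k-1-t, t) : 0 ≤ t < k}` (0-indexed) lies in the diagram of `p`. -/
noncomputable def clen (p : ℕ → ℕ) : ℕ :=
  sSup {k : ℕ | ∀ t, t < k → t < p (k - 1 - t)}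

/-- Any matching in the diagram of an antitone `p` forces the staircase of its size. -/
lemma matching_to_stair (p : ℕ → ℕ) (hp : Antitone p) (M : Finset (ℕ × ℕ))
    (h1 : ∀ x ∈ M, x.2 < p x.1)
    (h2 : ∀ x ∈ M, ∀ y ∈ M, x ≠ y → x.1 ≠ y.1 ∧ x.2 ≠ y.2) :
    ∀ t, t < M.card → t < p (M.card - 1 - t) := by
  intro t ht
  set s := M.card with hs
  set i := s - 1 - t with hi
  have his : i < s := by omega
  -- it suffices to show `s - i ≤ p i`
  suffices h : s - i ≤ p i by omega
  have hfst : Set.InjOn Prod.fst (M : Set (ℕ × ℕ)) := by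
    intro x hx y hy hxy
    by_contra hne
    exact (h2 x hx y hy hne).1 hxy
  have hsnd : Set.InjOn Prod.snd (M : Set (ℕ × ℕ)) := by
    intro x hx y hy hxy
    by_contra hne
    exact (h2 x hx y hy hne).2 hxy
  set M₁ := M.filter (fun x => i ≤ x.1) with hM₁
  set M₂ := M.filter (fun x => ¬ i ≤ x.1) with hM₂
  have hcard2 : M₂.card ≤ i := by
    have himg : M₂.image Prod.fst ⊆ Finset.range i := by
      intro a ha
      simp only [Finset.mem_image] at ha
      obtain ⟨x, hx, rfl⟩ := ha
      simp only [hM₂, Finset.mem_filter] at hx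
      simp only [Finset.mem_range]
      omega
    have := Finset.card_le_card himg
    rwa [Finset.card_image_of_injOn (hfst.mono (by
      intro x hx
      exact Finset.mem_of_mem_filter x hx)), Finset.card_range] at this
  have hsplit : M₁.card + M₂.card = s := by
    rw [hM₁, hM₂, Finset.card_filter_add_card_filter_not]
  have hcard1 : s - i ≤ M₁.card := by omega
  -- some element of M₁ has a large column
  have hex : ∃ x ∈ M₁, s - i - 1 ≤ x.2 := by
    by_contra hcon
    push_neg at hcon
    have himg : M₁.image Prod.snd ⊆ Finset.range (s - i - 1) := by
      intro a ha
      simp only [Finset.mem_image] at ha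
      obtain ⟨x, hx, rfl⟩ := ha
      simp only [Finset.mem_range]
      exact hcon x hx
    have := Finset.card_le_card himg
    rw [Finset.card_image_of_injOn (hsnd.mono (by
      intro x hx
      exact Finset.mem_of_mem_filter x hx)), Finset.card_range] at this
    omega
  obtain ⟨x, hx, hxc⟩ := hex
  simp only [hM₁, Finset.mem_filter] at hx
  have h3 : x.2 < p x.1 := h1 x hx.1
  have h4 : p x.1 ≤ p i := hp hx.2
  omega

/-- `|C_λ|` equals the maximum number of cells of `λ`, no two in the same row or column
(the maximum matching size of the bipartite graph `B_λ`). -/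
theorem stmt16 (p : ℕ → ℕ) (m : ℕ) (hp : Antitone p) (hm : ∀ i, m ≤ i → p i = 0) :
    clen p = sSup {s : ℕ | ∃ M : Finset (ℕ × ℕ),
      (∀ x ∈ M, x.2 < p x.1) ∧
      (∀ x ∈ M, ∀ y ∈ M, x ≠ y → x.1 ≠ y.1 ∧ x.2 ≠ y.2) ∧ M.card = s} := by
  unfold clen
  congr 1
  ext k
  simp only [Set.mem_setOf_eq]
  constructor
  · intro hk
    refine ⟨(Finset.range k).image (fun t => (k - 1 - t, t)), ?_, ?_, ?_⟩
    · intro x hx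
      simp only [Finset.mem_image, Finset.mem_range] at hx
      obtain ⟨t, ht, rfl⟩ := hx
      exact hk t ht
    · intro x hx y hy hxy
      simp only [Finset.mem_image, Finset.mem_range] at hx hy
      obtain ⟨t, ht, rfl⟩ := hx
      obtain ⟨u, hu, rfl⟩ := hy
      have htu : t ≠ u := by
        intro h; exact hxy (by rw [h])
      constructor <;> simp <;> omega
    · rw [Finset.card_image_of_injOn, Finset.card_range]
      intro t _ u _ h
      exact (Prod.mk.injEq _ _ _ _ ▸ h).2
  · rintro ⟨M, h1, h2, rfl⟩
    exact matching_to_stair p hp M h1 h2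
end

section
/- For any partition λ, let the thickening be the partition λ̄ with λ̄_1 = λ_1 + 1 and λ̄_i = λ_{i-1} + 1 for i > 1, and let |C_μ| denote the side length of the largest staircase antidiagonal in μ (the largest k with (k-i+1,i) ∈ μ for all i ≤ k). If λ has at least |C_λ|+1 rows and at least |C_λ|+1 columns, then |C_λ̄| = |C_λ| + 2; otherwise |C_λ̄| = |C_λ| + 1. -/
/-- The thickening `λ̄` of a partition `λ` with `m` rows: `λ̄_1 = λ_1 + 1` and
`λ̄_i = λ_{i-1} + 1` for `1 < i ≤ m + 1` (0-indexed below). -/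
def thick (p : ℕ → ℕ) (m : ℕ) : ℕ → ℕ :=
  fun i => if i = 0 then p 0 + 1 else if i ≤ m then p (i - 1) + 1 else 0

lemma clen_eq (p : ℕ → ℕ) (hp : Antitone p) (N : ℕ)
    (hN : ∀ t, t < N → t < p (N - 1 - t))
    (hN1 : ¬ ∀ t, t < N + 1 → t < p (N - t)) : clen p = N := by
  have hdc : ∀ k, (∀ t, t < k → t < p (k - 1 - t)) → ∀ k', k' ≤ k →
      (∀ t, t < k' → t < p (k' - 1 - t)) := by
    intro k hk k' hk' t ht
    have h1 : t < p (k - 1 - t) := hk t (lt_of_lt_of_le ht hk')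
    exact lt_of_lt_of_le h1 (hp (by omega))
  have hub : ∀ k ∈ {k : ℕ | ∀ t, t < k → t < p (k - 1 - t)}, k ≤ N := by
    intro k hk
    by_contra h
    refine hN1 (fun t ht => ?_)
    have := hdc k hk (N + 1) (by omega) t ht
    have hidx : N + 1 - 1 - t = N - t := by omega
    rwa [hidx] at this
  apply le_antisymm
  · exact csSup_le ⟨0, fun t ht => absurd ht (by omega)⟩ hub
  · exact le_csSup ⟨N, hub⟩ hN

/-- If `λ` has at least `|C_λ|+1` rows and columns then `|C_λ̄| = |C_λ| + 2`;
otherwise `|C_λ̄| = |C_λ| + 1`. -/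
theorem stmt17 (p : ℕ → ℕ) (m : ℕ) (hp : Antitone p) (hm : ∀ i, p i = 0 ↔ m ≤ i) :
    (clen p + 1 ≤ m ∧ clen p + 1 ≤ p 0 → clen (thick p m) = clen p + 2) ∧
    (¬ (clen p + 1 ≤ m ∧ clen p + 1 ≤ p 0) → clen (thick p m) = clen p + 1) := by
  set c := clen p with hc_def
  -- the staircase set for p is bounded above by m
  have hS_bdd : BddAbove {k : ℕ | ∀ t, t < k → t < p (k - 1 - t)} := by
    refine ⟨m, fun k hk => ?_⟩
    rcases Nat.eq_zero_or_pos k with h | h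
    · omega
    · have h0 := hk 0 h
      by_contra hmk
      have : p (k - 1 - 0) = 0 := (hm _).2 (by omega)
      omega
  have hS_ne : {k : ℕ | ∀ t, t < k → t < p (k - 1 - t)}.Nonempty :=
    ⟨0, fun t ht => absurd ht (Nat.not_lt_zero t)⟩
  have hc_mem : ∀ t, t < c → t < p (c - 1 - t) :=
    Nat.sSup_mem hS_ne hS_bdd
  have hc1 : ∃ t ≤ c, p (c - t) ≤ t := by
    by_contra h
    push_neg at h
    have hmem : (c + 1) ∈ {k : ℕ | ∀ t, t < k → t < p (k - 1 - t)} := by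
      intro t ht
      have hidx : c + 1 - 1 - t = c - t := by omega
      rw [hidx]
      exact h t (by omega)
    have h6 : c + 1 ≤ c := le_csSup hS_bdd hmem
    omega
  -- c ≤ m
  have hcm : c ≤ m := by
    rcases Nat.eq_zero_or_pos c with h | h
    · omega
    · have h0 := hc_mem 0 h
      by_contra hmk
      have : p (c - 1 - 0) = 0 := (hm _).2 (by omega)
      omega
  -- c ≤ p 0
  have hcp0 : c ≤ p 0 := by
    rcases Nat.eq_zero_or_pos c with h | h
    · omega
    · have h0 := hc_mem (c - 1) (by omega)
      have hidx : c - 1 - (c - 1) = 0 := by omega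
      rw [hidx] at h0
      omega
  -- the staircase inequality is non-strict one step further
  have hL : ∀ t, t ≤ c → t ≤ p (c - t) := by
    intro t
    induction t with
    | zero => intro _; exact Nat.zero_le _
    | succ s ih =>
      intro hs
      have h1 : s ≤ p (c - s) := ih (by omega)
      by_contra h
      have h3 : p (c - s) ≤ p (c - (s + 1)) := hp (by omega)
      have h4 : s < p (c - 1 - s) := hc_mem s (by omega)
      have hidx : c - 1 - s = c - (s + 1) := by omega
      rw [hidx] at h4
      omega
  have hq : Antitone (thick p m) := by
    intro i j hij
    simp only [thick]
    by_cases hj0 : j = 0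
    · have hi0 : i = 0 := by omega
      simp [hi0, hj0]
    · by_cases hjm : j ≤ m
      · rw [if_neg hj0, if_pos hjm]
        by_cases hi0 : i = 0
        · rw [if_pos hi0]
          have := hp (Nat.zero_le (j - 1))
          omega
        · rw [if_neg hi0, if_pos (show i ≤ m by omega)]
          have := hp (show i - 1 ≤ j - 1 by omega)
          omega
      · rw [if_neg hj0, if_neg hjm]
        positivity
  constructor
  · rintro ⟨h1, h2⟩
    apply clen_eq _ hq
    · intro t ht
      have hidx : c + 2 - 1 - t = c + 1 - t := by omega
      rw [hidx]
      simp only [thick]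
      by_cases htc : t = c + 1
      · rw [if_pos (by omega : c + 1 - t = 0)]
        omega
      · rw [if_neg (by omega : ¬ c + 1 - t = 0), if_pos (by omega : c + 1 - t ≤ m)]
        have h5 := hL t (by omega)
        have hidx2 : c + 1 - t - 1 = c - t := by omega
        rw [hidx2]
        omega
    · intro h
      obtain ⟨t0, ht0c, ht0⟩ := hc1
      have h5 := h (t0 + 1) (by omega)
      simp only [thick] at h5
      rw [if_neg (by omega : ¬ c + 2 - (t0 + 1) = 0)] at h5
      by_cases hmm : c + 2 - (t0 + 1) ≤ m
      · rw [if_pos hmm] at h5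
        have hidx : c + 2 - (t0 + 1) - 1 = c - t0 := by omega
        rw [hidx] at h5
        omega
      · rw [if_neg hmm] at h5
        omega
  · intro hH
    apply clen_eq _ hq
    · intro t ht
      have hidx : c + 1 - 1 - t = c - t := by omega
      rw [hidx]
      simp only [thick]
      by_cases htc : t = c
      · rw [if_pos (by omega : c - t = 0)]
        omega
      · rw [if_neg (by omega : ¬ c - t = 0), if_pos (by omega : c - t ≤ m)]
        have h4 := hc_mem t (by omega)
        have hidx2 : c - t - 1 = c - 1 - t := by omega
        rw [hidx2]
        omega
    · intro h
      rw [not_and_or] at hH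
      rcases hH with hH | hH
      · have h0 := h 0 (by omega)
        simp only [thick] at h0
        rw [if_neg (by omega : ¬ c + 1 - 0 = 0), if_neg (by omega : ¬ c + 1 - 0 ≤ m)] at h0
        omega
      · have h0 := h (c + 1) (by omega)
        simp only [thick] at h0
        rw [if_pos (by omega : c + 1 - (c + 1) = 0)] at h0
        omega
end
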